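/- Let X be a random vector in ℝ^{d+1} with E‖X‖₂³ < ∞, let f ∈ C²(ℝ) with bounded second derivative, let μ̄ = E X, and for λ ≥ 0 define L_λ(γ) = E f(γ^⊤X) + (λ/2)(γ^⊤μ̄)². Suppose there are nonnegative numbers a, b, c such that x f′(x) ≥ −b for all x ∈ ℝ and f′(x)·sgn(x) ≥ c for all |x| ≥ a. Then for every γ ≠ 0, ‖∇L_λ(γ)‖₂ ≥ c·inf_{‖u‖₂=1}E|u^⊤X| − (ac + b)/‖γ‖₂. -/

import Mathlib

/-!
Differentiating under the integral sign gives `∇L_λ(γ) = E[f′(T) X] + λ (γᵀμ̄) μ̄` with `T = γᵀX`,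
hence `⟪∇L_λ(γ), γ⟫ = E[T f′(T)] + λ (γᵀμ̄)² ≥ E[T f′(T)]`. The two sign conditions give the
pointwise bound `t f′(t) ≥ c |t| − (ac + b)` (split at `|t| = a`), and `E|T| ≥ ‖γ‖ inf_u E|uᵀX|`
by testing the infimum at `u = γ / ‖γ‖`. Cauchy–Schwarz `⟪∇L_λ(γ), γ⟫ ≤ ‖∇L_λ(γ)‖ ‖γ‖` and
division by `‖γ‖` conclude. Differentiation under the integral is dominated through
`|f′(t)| ≤ |f′(0)| + F₂ |t|` and `E‖X‖² < ∞`.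
-/

open MeasureTheory
open scoped RealInnerProductSpace

/-- `ℝ^m` with the Euclidean norm. -/
abbrev Vec (m : ℕ) := EuclideanSpace ℝ (Fin m)

/-- The loss `L_λ(γ) = E f(γ⊤X) + (λ/2)(γ⊤μ̄)²`, where `μ̄ = E X`. -/
noncomputable def genLoss {m : ℕ} {Ω : Type*} [MeasurableSpace Ω] (P : Measure Ω)
    (X : Ω → Vec m) (f : ℝ → ℝ) (lam : ℝ) (γ : Vec m) : ℝ :=
  (∫ ω, f ⟪γ, X ω⟫ ∂P) + lam / 2 * ⟪γ, ∫ ω, X ω ∂P⟫ ^ 2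

open InnerProductSpace

theorem Real.sign_mul_abs_self (x : ℝ) : Real.sign x * |x| = x := by
  rcases lt_trichotomy x 0 with h | rfl | h
  · rw [Real.sign_of_neg h, abs_of_neg h]; ring
  · simp
  · rw [Real.sign_of_pos h, abs_of_pos h]; ring

theorem mul_abs_sub_le_mul_of_mul_sign_ge {g : ℝ → ℝ} {a b c : ℝ} (ha : 0 ≤ a) (hb : 0 ≤ b)
    (hc : 0 ≤ c) (hlow : ∀ x, -b ≤ x * g x) (hfar : ∀ x, a ≤ |x| → c ≤ g x * Real.sign x)
    (x : ℝ) : c * |x| - (a * c + b) ≤ x * g x := by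
  rcases le_total |x| a with hx | hx
  · nlinarith [hlow x, mul_le_mul_of_nonneg_left hx hc]
  · have hx' : x * g x = |x| * (g x * Real.sign x) := by
      nth_rewrite 1 [← Real.sign_mul_abs_self x]; ring
    nlinarith [mul_le_mul_of_nonneg_left (hfar x hx) (abs_nonneg x), mul_nonneg ha hc]

theorem abs_le_of_abs_deriv_le_add_mul_abs {g : ℝ → ℝ} (hg : Differentiable ℝ g) {K L : ℝ}
    (hL : 0 ≤ L) (hg' : ∀ x, |deriv g x| ≤ K + L * |x|) (t : ℝ) :
    |g t| ≤ |g 0| + (K + L * |t|) * |t| := by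
  have hsub : ‖g t - g 0‖ ≤ (K + L * |t|) * ‖t - 0‖ :=
    (convex_Icc (-|t|) |t|).norm_image_sub_le_of_norm_deriv_le (fun y _ => hg y)
      (fun y hy => (hg' y).trans (by have := abs_le.mpr hy; gcongr))
      ⟨by simp, abs_nonneg t⟩ ⟨neg_abs_le t, le_abs_self t⟩
  rw [sub_zero, Real.norm_eq_abs, Real.norm_eq_abs] at hsub
  linarith [abs_sub_abs_le_abs_sub (g t) (g 0)]

theorem integrable_of_norm_le_quadratic {Ω E F : Type*} [MeasurableSpace Ω] {P : Measure Ω}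
    [IsFiniteMeasure P] [NormedAddCommGroup E] [NormedAddCommGroup F] {X : Ω → E}
    {h : Ω → F} (hX1 : Integrable (fun ω => ‖X ω‖) P) (hX2 : Integrable (fun ω => ‖X ω‖ ^ 2) P)
    (hm : AEStronglyMeasurable h P) (A B C : ℝ)
    (hle : ∀ ω, ‖h ω‖ ≤ A + B * ‖X ω‖ + C * ‖X ω‖ ^ 2) : Integrable h P :=
  (((integrable_const A).add (hX1.const_mul B)).add (hX2.const_mul C)).mono' hm (ae_of_all _ hle)

section InnerProductSpace

variable {E : Type*} [NormedAddCommGroup E] [InnerProductSpace ℝ E]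
  {Ω : Type*} [MeasurableSpace Ω] {P : Measure Ω} [IsFiniteMeasure P] {X : Ω → E}
  {f : ℝ → ℝ} {K L : ℝ}

theorem norm_deriv_inner_smul_le {r : ℝ} (hL : 0 ≤ L)
    (hf' : ∀ s, |deriv f s| ≤ K + L * |s|) {v : E} (hv : ‖v‖ ≤ r) (x : E) :
    ‖deriv f ⟪v, x⟫ • x‖ ≤ K * ‖x‖ + L * r * ‖x‖ ^ 2 := by
  have hvx : |⟪v, x⟫| ≤ r * ‖x‖ := (abs_real_inner_le_norm v x).trans (by gcongr)
  calc ‖deriv f ⟪v, x⟫ • x‖ = |deriv f ⟪v, x⟫| * ‖x‖ := by rw [norm_smul, Real.norm_eq_abs]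
    _ ≤ (K + L * (r * ‖x‖)) * ‖x‖ := by gcongr; exact (hf' _).trans (by gcongr)
    _ = K * ‖x‖ + L * r * ‖x‖ ^ 2 := by ring

theorem integrable_deriv_inner_smul (hL : 0 ≤ L) (hf' : ∀ s, |deriv f s| ≤ K + L * |s|)
    (hX : AEStronglyMeasurable X P) (hX1 : Integrable (fun ω => ‖X ω‖) P)
    (hX2 : Integrable (fun ω => ‖X ω‖ ^ 2) P) (v : E) :
    Integrable (fun ω => deriv f ⟪v, X ω⟫ • X ω) P :=
  integrable_of_norm_le_quadratic hX1 hX2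
    (((measurable_deriv f).comp_aemeasurable (aestronglyMeasurable_const.inner hX).aemeasurable
      ).aestronglyMeasurable.smul hX) 0 K (L * ‖v‖)
    fun ω => by simpa using norm_deriv_inner_smul_le hL hf' le_rfl (X ω)

variable [CompleteSpace E]

theorem hasFDerivAt_inner_left (x v : E) :
    HasFDerivAt (fun w : E => ⟪w, x⟫) (toDual ℝ E x) v := by
  convert (toDual ℝ E x).hasFDerivAt using 1
  ext w
  simp [toDual_apply_apply, real_inner_comm]

theorem HasDerivAt.hasFDerivAt_comp_inner_left {g : ℝ → ℝ} {g' : ℝ} {x v : E}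
    (hg : HasDerivAt g g' ⟪v, x⟫) :
    HasFDerivAt (fun w : E => g ⟪w, x⟫) (toDual ℝ E (g' • x)) v := by
  refine (hg.comp_hasFDerivAt v (hasFDerivAt_inner_left x v)).congr_fderiv ?_
  ext w
  simp

theorem hasFDerivAt_mul_inner_left_sq (r : ℝ) (x v : E) :
    HasFDerivAt (fun w : E => r / 2 * ⟪w, x⟫ ^ 2) (toDual ℝ E ((r * ⟪v, x⟫) • x)) v := by
  refine (((hasFDerivAt_inner_left x v).pow 2).const_mul (r / 2)).congr_fderiv ?_
  ext w
  simp
  ring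

theorem hasFDerivAt_integral_comp_inner_left (hf : Differentiable ℝ f) (hL : 0 ≤ L)
    (hf' : ∀ s, |deriv f s| ≤ K + L * |s|) (hX : AEStronglyMeasurable X P)
    (hX1 : Integrable (fun ω => ‖X ω‖) P) (hX2 : Integrable (fun ω => ‖X ω‖ ^ 2) P) (γ : E) :
    HasFDerivAt (fun v => ∫ ω, f ⟪v, X ω⟫ ∂P)
      (toDual ℝ E (∫ ω, deriv f ⟪γ, X ω⟫ • X ω ∂P)) γ := by
  have hK : 0 ≤ K := (abs_nonneg _).trans (by simpa using hf' 0)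
  have hf_int : Integrable (fun ω => f ⟪γ, X ω⟫) P := by
    refine integrable_of_norm_le_quadratic hX1 hX2 (hf.continuous.comp_aestronglyMeasurable
      (aestronglyMeasurable_const.inner hX)) |f 0| (K * ‖γ‖) (L * ‖γ‖ ^ 2) fun ω => ?_
    have hγX : |⟪γ, X ω⟫| ≤ ‖γ‖ * ‖X ω‖ := abs_real_inner_le_norm γ (X ω)
    calc ‖f ⟪γ, X ω⟫‖ ≤ |f 0| + (K + L * |⟪γ, X ω⟫|) * |⟪γ, X ω⟫| :=
          abs_le_of_abs_deriv_le_add_mul_abs hf hL hf' _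
      _ ≤ |f 0| + (K + L * (‖γ‖ * ‖X ω‖)) * (‖γ‖ * ‖X ω‖) := by gcongr
      _ = _ := by ring
  have hg_int := integrable_deriv_inner_smul hL hf' hX hX1 hX2 γ
  -- `toDual` is typed as `starRingEnd ℝ`-semilinear, hence `integral_comp_commSL`.
  have hcomm : ∫ ω, toDual ℝ E (deriv f ⟪γ, X ω⟫ • X ω) ∂P
      = toDual ℝ E (∫ ω, deriv f ⟪γ, X ω⟫ • X ω ∂P) :=
    ((toDual ℝ E).toContinuousLinearEquiv : E →SL[starRingEnd ℝ] StrongDual ℝ E)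
      |>.integral_comp_commSL (by simp) hg_int
  rw [← hcomm]
  refine hasFDerivAt_integral_of_dominated_of_fderiv_le (Metric.ball_mem_nhds γ one_pos)
    (F := fun v ω => f ⟪v, X ω⟫) (F' := fun v ω => toDual ℝ E (deriv f ⟪v, X ω⟫ • X ω))
    (bound := fun ω => K * ‖X ω‖ + L * (‖γ‖ + 1) * ‖X ω‖ ^ 2)
    (.of_forall fun v => hf.continuous.comp_aestronglyMeasurable
      (aestronglyMeasurable_const.inner hX)) hf_int
    ((toDual ℝ E).continuous.comp_aestronglyMeasurable hg_int.aestronglyMeasurable)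
    (ae_of_all _ fun ω v hv => ?_) ((hX1.const_mul K).add (hX2.const_mul _))
    (ae_of_all _ fun ω v _ => (hf _).hasDerivAt.hasFDerivAt_comp_inner_left)
  rw [LinearIsometryEquiv.norm_map]
  refine norm_deriv_inner_smul_le hL hf' ?_ (X ω)
  linarith [norm_le_norm_add_norm_sub' v γ, mem_ball_iff_norm.mp hv]

end InnerProductSpace

section Estimates

variable {E : Type*} [NormedAddCommGroup E] [InnerProductSpace ℝ E]

theorem sub_div_norm_le_norm_of_mul_sub_le_inner {x y : E} (hx : x ≠ 0) {r s : ℝ}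
    (h : ‖x‖ * r - s ≤ ⟪y, x⟫) : r - s / ‖x‖ ≤ ‖y‖ := by
  have hxn : 0 < ‖x‖ := norm_pos_iff.mpr hx
  rw [sub_le_iff_le_add, ← sub_le_iff_le_add', le_div_iff₀ hxn]
  nlinarith [real_inner_le_norm y x]

variable {Ω : Type*} [MeasurableSpace Ω] {P : Measure Ω}

theorem norm_mul_iInf_sphere_le_integral_abs_inner (γ : E) (Y : Ω → E) :
    ‖γ‖ * (⨅ u : Metric.sphere (0 : E) 1, ∫ ω, |⟪(u : E), Y ω⟫| ∂P)
      ≤ ∫ ω, |⟪γ, Y ω⟫| ∂P := by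
  rcases eq_or_ne γ 0 with rfl | hγ
  · simp
  have hγn : 0 < ‖γ‖ := norm_pos_iff.mpr hγ
  have hu : ‖γ‖⁻¹ • γ ∈ Metric.sphere (0 : E) 1 := by simp [norm_smul, hγn.ne']
  have hbdd : BddBelow (Set.range fun u : Metric.sphere (0 : E) 1 => ∫ ω, |⟪(u : E), Y ω⟫| ∂P) :=
    ⟨0, by rintro _ ⟨u, rfl⟩; exact integral_nonneg fun _ => abs_nonneg _⟩
  calc ‖γ‖ * (⨅ u : Metric.sphere (0 : E) 1, ∫ ω, |⟪(u : E), Y ω⟫| ∂P)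
      ≤ ‖γ‖ * ∫ ω, |⟪‖γ‖⁻¹ • γ, Y ω⟫| ∂P := by gcongr; exact ciInf_le hbdd ⟨_, hu⟩
    _ = ∫ ω, |⟪γ, Y ω⟫| ∂P := by
      simp_rw [real_inner_smul_left, abs_mul, abs_inv, abs_norm]
      rw [integral_const_mul, ← mul_assoc, mul_inv_cancel₀ hγn.ne', one_mul]

theorem mul_integral_abs_inner_sub_le_inner_integral [CompleteSpace E] [IsProbabilityMeasure P]
    {X : Ω → E} {g : ℝ → ℝ} {c e : ℝ} (hge : ∀ x, c * |x| - e ≤ x * g x) (hX : Integrable X P) {γ : E}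
    (hg : Integrable (fun ω => g ⟪γ, X ω⟫ • X ω) P) :
    c * ∫ ω, |⟪γ, X ω⟫| ∂P - e ≤ ⟪∫ ω, g ⟪γ, X ω⟫ • X ω ∂P, γ⟫ := by
  have habs : Integrable (fun ω => c * |⟪γ, X ω⟫|) P := ((hX.const_inner γ).abs).const_mul c
  have hmean : ∫ ω, (c * |⟪γ, X ω⟫| - e) ∂P = c * ∫ ω, |⟪γ, X ω⟫| ∂P - e := by
    rw [integral_sub habs (integrable_const e), integral_const_mul]; simp
  rw [← hmean, real_inner_comm, ← integral_inner hg]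
  refine integral_mono (habs.sub (integrable_const e)) (hg.const_inner γ) fun ω => ?_
  simpa only [real_inner_smul_right, mul_comm] using hge ⟪γ, X ω⟫

end Estimates

theorem hasGradientAt_genLoss {m : ℕ} {Ω : Type*} [MeasurableSpace Ω] {P : Measure Ω}
    [IsFiniteMeasure P] {X : Ω → Vec m} {f : ℝ → ℝ} {K L : ℝ} (hf : Differentiable ℝ f)
    (hL : 0 ≤ L) (hf' : ∀ s, |deriv f s| ≤ K + L * |s|) (hX : AEStronglyMeasurable X P)
    (hX1 : Integrable (fun ω => ‖X ω‖) P) (hX2 : Integrable (fun ω => ‖X ω‖ ^ 2) P)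
    (lam : ℝ) (γ : Vec m) :
    HasGradientAt (genLoss P X f lam)
      (∫ ω, deriv f ⟪γ, X ω⟫ • X ω ∂P + (lam * ⟪γ, ∫ ω, X ω ∂P⟫) • ∫ ω, X ω ∂P) γ := by
  rw [hasGradientAt_iff_hasFDerivAt, map_add]
  exact (hasFDerivAt_integral_comp_inner_left hf hL hf' hX hX1 hX2 γ).add
    (hasFDerivAt_mul_inner_left_sq lam _ γ)

/-- if moreover `x f'(x) ≥ −b` for all `x` and `f'(x)·sgn(x) ≥ c` for `|x| ≥ a`
(`a, b, c ≥ 0`), then for every `γ ≠ 0`,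
`‖∇L_λ(γ)‖₂ ≥ c·inf_u E|u⊤X| − (ac + b)/‖γ‖₂`. -/
theorem loss_gradient_lower_bound
    {d : ℕ} {Ω : Type*} [MeasurableSpace Ω] (P : Measure Ω) [IsProbabilityMeasure P]
    (X : Ω → Vec (d + 1)) (f : ℝ → ℝ) (lam a b c : ℝ)
    (hX : Measurable X) (hX3 : Integrable (fun ω => ‖X ω‖ ^ 3) P)
    (hlam : 0 ≤ lam)
    (hf : ContDiff ℝ 2 f) (hf2 : ∃ F₂ : ℝ, ∀ x, |deriv (deriv f) x| ≤ F₂)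
    (ha : 0 ≤ a) (hb : 0 ≤ b) (hc : 0 ≤ c)
    (hlow : ∀ x : ℝ, -b ≤ x * deriv f x)
    (hfar : ∀ x : ℝ, a ≤ |x| → c ≤ deriv f x * Real.sign x) :
    ∀ γ : Vec (d + 1), γ ≠ 0 →
      c * (⨅ u : Metric.sphere (0 : Vec (d + 1)) 1, ∫ ω, |⟪(u : Vec (d + 1)), X ω⟫| ∂P)
          - (a * c + b) / ‖γ‖
        ≤ ‖gradient (genLoss P X f lam) γ‖ := by
  obtain ⟨F₂, hF₂⟩ := hf2
  have hF₂0 : 0 ≤ F₂ := (abs_nonneg _).trans (hF₂ 0)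
  have hf' (x : ℝ) : |deriv f x| ≤ |deriv f 0| + F₂ * |x| := by
    simpa using abs_le_of_abs_deriv_le_add_mul_abs hf.differentiable_deriv_two le_rfl
      (K := F₂) (by simpa using hF₂) x
  have hXm : AEStronglyMeasurable X P := hX.aestronglyMeasurable
  have hX1 : Integrable (fun ω => ‖X ω‖) P := by
    simpa using integrable_norm_pow_of_le hXm (p := 1) (by norm_num) hX3
  have hX2 := integrable_norm_pow_of_le hXm (p := 2) (by norm_num) hX3
  intro γ hγ
  have hG := hasGradientAt_genLoss (hf.differentiable (by norm_num)) hF₂0 hf' hXm hX1 hX2 lam γ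
  rw [hG.gradient]
  refine sub_div_norm_le_norm_of_mul_sub_le_inner hγ ?_
  calc ‖γ‖ * (c * ⨅ u : Metric.sphere (0 : Vec (d + 1)) 1, ∫ ω, |⟪(u : Vec (d + 1)), X ω⟫| ∂P)
        - (a * c + b)
      ≤ c * ∫ ω, |⟪γ, X ω⟫| ∂P - (a * c + b) := by
        rw [mul_left_comm]; gcongr; exact norm_mul_iInf_sphere_le_integral_abs_inner γ X
    _ ≤ ⟪∫ ω, deriv f ⟪γ, X ω⟫ • X ω ∂P, γ⟫ :=
        mul_integral_abs_inner_sub_le_inner_integral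
          (mul_abs_sub_le_mul_of_mul_sign_ge ha hb hc hlow hfar) ((integrable_norm_iff hXm).1 hX1)
          (integrable_deriv_inner_smul hF₂0 hf' hXm hX1 hX2 γ)
    _ ≤ _ := by
        rw [inner_add_left, real_inner_smul_left, real_inner_comm _ γ, mul_assoc]
        exact le_add_of_nonneg_right (mul_nonneg hlam (mul_self_nonneg _))
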